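/- arXiv:1808.06655 — 5 statements merged into one kernel-verified Lean document; each statement's English description precedes it below -/
import Mathlib

section
/- There exists an absolute constant C > 0 such that the following holds. Let F be any field, let n ≥ 2, and let f, g, h be polynomials in F[x_1, ..., x_n] with f = g·h and f ≠ 0. If every variable has individual degree at most d (with d ≥ 1) in g, then the sparsity of g satisfies mon(g) ≤ mon(f)^(C·d²·log n). In particular, if f has sparsity s and individual degrees at most d, every factor of f has sparsity at most s^(C·d²·log n). -/
/-!
Let `A ⊆ ℕⁿ` be the support of `g` and `P` its convex hull, the Newton polytope of `g`.
A linear functional exposing a vertex `a` of `P` is maximised on the support of `g * h` at a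
unique sum `a + b`, so distinct vertices give distinct monomials of `f = g * h`: `P` has at most
`mon(f)` vertices. Every exponent `e ∈ A` is a convex combination of these vertices, and all of
them lie in the cube `[0, d]ⁿ`. Sampling `k ≈ 2 d² log (2n)` vertices according to the weights of
such a combination, Hoeffding's inequality and a union bound over the `n` coordinates show that
some sample has empirical mean within `1/2` of `e` in every coordinate. Since `e` is a lattice
point, the sample determines `e`, hence `mon(g) ≤ (#vertices)^k ≤ mon(f)^k`.
-/

open MeasureTheory ProbabilityTheory

theorem Real.mul_exp_neg_lt_one {N x : ℝ} (hN : 0 ≤ N) (h : Real.log N < x) :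
    N * Real.exp (-x) < 1 := by
  rcases hN.eq_or_lt with rfl | hN
  · simp
  calc N * Real.exp (-x) < N * Real.exp (-Real.log N) := by gcongr
    _ = 1 := by rw [Real.exp_neg, Real.exp_log hN, mul_inv_cancel₀ hN.ne']

section Hoeffding

variable {α : Type*} [MeasurableSpace α] {μ : Measure α} [IsProbabilityMeasure μ]
  {Y : α → ℝ} {m r : ℝ}

theorem measureReal_pi_sum_ge_le (hm : AEMeasurable Y μ) (hb : ∀ᵐ x ∂μ, |Y x - m| ≤ r)
    (hc : μ[Y] = 0) (k : ℕ) {ε : ℝ} (hε : 0 ≤ ε) :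
    (Measure.pi fun _ : Fin k ↦ μ).real {u | ε ≤ ∑ t, Y (u t)} ≤
      Real.exp (-ε ^ 2 / (2 * k * r ^ 2)) := by
  have hY := hasSubgaussianMGF_of_mem_Icc_of_integral_eq_zero hm
    (hb.mono fun x hx ↦ Set.mem_Icc_iff_abs_le.1 (abs_sub_comm (Y x) m ▸ hx)) hc
  have h := HasSubgaussianMGF.measure_sum_ge_le_of_iIndepFun
    (iIndepFun_pi (μ := fun _ : Fin k ↦ μ) fun _ ↦ hm) (s := Finset.univ)
    (fun t _ ↦ HasSubgaussianMGF.of_map (measurable_pi_apply t).aemeasurable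
      (by rwa [(measurePreserving_eval _ t).map_eq])) hε
  have hc : ((∑ _t : Fin k, (‖m + r - (m - r)‖₊ / 2) ^ 2 : NNReal) : ℝ) = k * r ^ 2 := by
    simp [add_sub_sub_cancel, ← two_mul]
  rwa [hc, ← mul_assoc] at h

theorem measureReal_pi_abs_sum_ge_le (hm : AEMeasurable Y μ) (hb : ∀ᵐ x ∂μ, |Y x - m| ≤ r)
    (hc : μ[Y] = 0) (k : ℕ) {ε : ℝ} (hε : 0 ≤ ε) :
    (Measure.pi fun _ : Fin k ↦ μ).real {u | ε ≤ |∑ t, Y (u t)|} ≤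
      2 * Real.exp (-ε ^ 2 / (2 * k * r ^ 2)) := by
  have hsplit : {u : Fin k → α | ε ≤ |∑ t, Y (u t)|} ⊆
      {u | ε ≤ ∑ t, Y (u t)} ∪ {u | ε ≤ ∑ t, (-Y) (u t)} := fun u hu ↦ by
    rcases le_abs.1 (show ε ≤ |∑ t, Y (u t)| from hu) with h | h
    · exact Or.inl h
    · exact Or.inr (by simpa [Finset.sum_neg_distrib] using h)
  have hneg := measureReal_pi_sum_ge_le (m := -m) hm.neg
    (hb.mono fun x hx ↦ by rwa [Pi.neg_apply, neg_sub_neg, abs_sub_comm])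
    (by rw [integral_neg', hc, neg_zero]) k hε
  calc _ ≤ _ := measureReal_mono hsplit
    _ ≤ _ := measureReal_union_le _ _
    _ ≤ _ := by linarith [measureReal_pi_sum_ge_le hm hb hc k hε]

end Hoeffding

theorem Finset.exists_isProbabilityMeasure_integral_apply_eq {σ : Type*} [Countable σ]
    {V : Finset (σ → ℝ)} {p : σ → ℝ} (hp : p ∈ convexHull ℝ (V : Set (σ → ℝ))) :
    ∃ μ : Measure V, IsProbabilityMeasure μ ∧ ∀ j, ∫ v, (v : σ → ℝ) j ∂μ = p j := by
  obtain ⟨w, hw0, hw1, hwp⟩ := Finset.mem_convexHull'.1 hp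
  let P : PMF V := PMF.ofFintype (fun v ↦ ENNReal.ofReal (w v)) (by
    rw [← ENNReal.ofReal_sum_of_nonneg (fun (v : V) _ ↦ hw0 v.1 v.2), Finset.sum_coe_sort V w, hw1,
      ENNReal.ofReal_one])
  refine ⟨P.toMeasure, inferInstance, fun j ↦ ?_⟩
  rw [PMF.integral_eq_sum, ← hwp, Finset.sum_apply, ← Finset.sum_coe_sort V (fun y ↦ (w y • y) j)]
  refine Finset.sum_congr rfl fun v _ ↦ ?_
  simp [P, PMF.ofFintype_apply, ENNReal.toReal_ofReal (hw0 v v.2)]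

/-- Maurey's empirical approximation of a point of a polytope, in the sup norm. -/
theorem exists_dist_inv_smul_sum_lt_of_mem_convexHull {σ : Type*} [Fintype σ]
    {V : Finset (σ → ℝ)} {c p : σ → ℝ} {r ε : ℝ} {k : ℕ} (hr : 0 < r) (hε : 0 < ε)
    (hV : ∀ v ∈ V, ‖v - c‖ ≤ r) (hp : p ∈ convexHull ℝ (V : Set (σ → ℝ)))
    (hk : 2 * r ^ 2 * Real.log (2 * Fintype.card σ) < k * ε ^ 2) :
    ∃ u : Fin k → V, dist ((k : ℝ)⁻¹ • ∑ t, (u t : σ → ℝ)) p < ε := by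
  obtain ⟨μ, hμ, hmean⟩ := V.exists_isProbabilityMeasure_integral_apply_eq hp
  have hk0 : (0 : ℝ) < k := by
    have : 0 ≤ Real.log (2 * Fintype.card σ) := by exact_mod_cast Real.log_natCast_nonneg _
    by_contra! h
    nlinarith [sq_nonneg ε, sq_nonneg r]
  let Y (j : σ) (v : V) : ℝ := (v : σ → ℝ) j - p j
  have htail (j : σ) : (Measure.pi fun _ : Fin k ↦ μ).real {u | k * ε ≤ |∑ t, Y j (u t)|} ≤
      2 * Real.exp (-(k * ε) ^ 2 / (2 * k * r ^ 2)) := by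
    refine measureReal_pi_abs_sum_ge_le (m := c j - p j) (measurable_of_finite _).aemeasurable
      (ae_of_all _ fun v ↦ ?_) ?_ k (by positivity)
    · simpa [Y] using (norm_le_pi_norm (v - c : σ → ℝ) j).trans (hV v v.2)
    · rw [integral_sub .of_finite (integrable_const _), hmean]
      simp
  by_contra! hno
  have hcover : ⋃ j, {u : Fin k → V | k * ε ≤ |∑ t, Y j (u t)|} = Set.univ := by
    refine Set.eq_univ_of_forall fun u ↦ Set.mem_iUnion.2 ?_
    obtain ⟨j, hj⟩ : ∃ j, ε ≤ |((k : ℝ)⁻¹ • ∑ t, (u t : σ → ℝ) - p) j| := by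
      by_contra! h
      exact (hno u).not_gt (dist_eq_norm _ p ▸ (pi_norm_lt_iff hε).2 h)
    refine ⟨j, show k * ε ≤ _ from ?_⟩
    have hj' : ((k : ℝ)⁻¹ • ∑ t, (u t : σ → ℝ) - p) j = (k : ℝ)⁻¹ * ∑ t, Y j (u t) := by
      simp [Y, Finset.sum_apply, Finset.sum_sub_distrib]
      field_simp
    rwa [hj', abs_mul, abs_inv, Nat.abs_cast, le_inv_mul_iff₀ hk0] at hj
  have hunion : 1 ≤ ∑ j, (Measure.pi fun _ : Fin k ↦ μ).real {u | k * ε ≤ |∑ t, Y j (u t)|} :=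
    calc (1 : ℝ) = (Measure.pi fun _ : Fin k ↦ μ).real Set.univ := probReal_univ.symm
      _ ≤ _ := hcover ▸ measureReal_iUnion_fintype_le _
  have hsum := Finset.sum_le_sum fun j (_ : j ∈ Finset.univ) ↦ htail j
  have hsmall := Real.mul_exp_neg_lt_one (N := 2 * Fintype.card σ) (by positivity)
    (x := (k * ε) ^ 2 / (2 * k * r ^ 2)) (by
      rw [lt_div_iff₀ (by positivity)]
      nlinarith)
  simp only [Finset.sum_const, Finset.card_univ, nsmul_eq_mul, neg_div] at hsum
  linarith

theorem UniqueAdd.of_lt_of_le {M : Type*} [AddZeroClass M] [IsLeftCancelAdd M] (φ : M →+ ℝ)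
    {A B : Finset M} {a b : M} (ha : ∀ a' ∈ A, a' ≠ a → φ a' < φ a)
    (hb : ∀ b' ∈ B, φ b' ≤ φ b) : UniqueAdd A B a b := by
  intro a' b' ha' hb' hab
  have ha'a : a' = a := by
    by_contra hne
    have := congrArg φ hab
    rw [map_add, map_add] at this
    linarith [ha a' ha' hne, hb b' hb']
  subst ha'a
  exact ⟨rfl, add_left_cancel hab⟩

theorem Set.Finite.extremePoints_convexHull_subset_exposedPoints {E : Type*}
    [NormedAddCommGroup E] [NormedSpace ℝ E] {A : Set E} (hA : A.Finite) :
    (convexHull ℝ A).extremePoints ℝ ⊆ A.exposedPoints ℝ := by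
  intro v hv
  have hv' : v ∉ convexHull ℝ (A \ {v}) := fun hcon ↦
    ((convex_convexHull ℝ A).mem_extremePoints_iff_mem_sdiff_convexHull_sdiff.1 hv).2
      (convexHull_mono (Set.sdiff_subset_sdiff_left (subset_convexHull ℝ A)) hcon)
  obtain ⟨l, u, hlu, huv⟩ := geometric_hahn_banach_closed_point (convex_convexHull ℝ _)
    ((hA.subset Set.sdiff_subset).isClosed_convexHull ℝ) hv'
  refine ⟨extremePoints_convexHull_subset hv, l, fun y hy ↦ ?_⟩
  rcases eq_or_ne y v with rfl | hyv
  · simp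
  have hlt : l y < l v := (hlu y (subset_convexHull ℝ _ ⟨hy, hyv⟩)).trans huv
  exact ⟨hlt.le, fun hle ↦ absurd hle hlt.not_ge⟩

theorem Set.Finite.subset_convexHull_exposedPoints {E : Type*}
    [NormedAddCommGroup E] [NormedSpace ℝ E] {A : Set E} (hA : A.Finite) :
    A ⊆ convexHull ℝ (A.exposedPoints ℝ) := by
  have hext : convexHull ℝ ((convexHull ℝ A).extremePoints ℝ) = convexHull ℝ A := by
    rw [← ((hA.subset extremePoints_convexHull_subset).isClosed_convexHull ℝ).closure_eq]
    exact closure_convexHull_extremePoints (hA.isCompact_convexHull ℝ) (convex_convexHull ℝ A)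
  calc A ⊆ convexHull ℝ A := subset_convexHull ℝ A
    _ = convexHull ℝ ((convexHull ℝ A).extremePoints ℝ) := hext.symm
    _ ⊆ convexHull ℝ (A.exposedPoints ℝ) :=
      convexHull_mono hA.extremePoints_convexHull_subset_exposedPoints

theorem exists_sample_size {n d : ℕ} (hn : 2 ≤ n) (hd : 1 ≤ d) :
    ∃ k : ℕ, 2 * (d : ℝ) ^ 2 * Real.log (2 * n) < k ∧ (k : ℝ) ≤ 6 * (d : ℝ) ^ 2 * Real.log n := by
  have hn' : (2 : ℝ) ≤ n := by exact_mod_cast hn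
  have hd' : (1 : ℝ) ≤ (d : ℝ) ^ 2 := by exact_mod_cast Nat.one_le_pow _ _ hd
  have hlog2 : Real.log 2 ≤ Real.log n := Real.log_le_log two_pos hn'
  have hlog : Real.log (2 * n) = Real.log 2 + Real.log n := Real.log_mul two_ne_zero (by positivity)
  have hhalf : 1 / 2 < Real.log 2 := by linarith [Real.log_two_gt_d9]
  have hx : 0 ≤ 2 * (d : ℝ) ^ 2 * Real.log (2 * n) := by rw [hlog]; positivity
  refine ⟨⌊2 * (d : ℝ) ^ 2 * Real.log (2 * n)⌋₊ + 1, by exact_mod_cast Nat.lt_floor_add_one _, ?_⟩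
  push_cast
  nlinarith [Nat.floor_le hx]

namespace MvPolynomial

variable {σ R : Type*}

def exponentVector : (σ →₀ ℕ) →+ σ → ℝ where
  toFun e i := e i
  map_zero' := by ext; simp
  map_add' _ _ := by ext; simp

@[simp]
theorem exponentVector_apply (e : σ →₀ ℕ) (i : σ) : exponentVector e i = e i := rfl

theorem exponentVector_injective : Function.Injective (exponentVector (σ := σ)) :=
  fun _ _ h ↦ Finsupp.ext fun i ↦ by simpa using congrFun h i

theorem eq_of_dist_exponentVector_lt_one [Fintype σ] {e e' : σ →₀ ℕ}
    (h : dist (exponentVector e) (exponentVector e') < 1) : e = e' := by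
  ext i
  have hi : |(e i : ℝ) - e' i| < 1 := by
    simpa [Real.dist_eq] using (dist_le_pi_dist _ _ i).trans_lt h
  obtain ⟨h1, h2⟩ := abs_lt.1 hi
  have h1' : (e' i : ℤ) < e i + 1 := by exact_mod_cast (by linarith : (e' i : ℝ) < e i + 1)
  have h2' : (e i : ℤ) < e' i + 1 := by exact_mod_cast (by linarith : (e i : ℝ) < e' i + 1)
  omega

theorem card_le_card_pow_of_forall_mem_convexHull [Fintype σ] {T : Finset (σ →₀ ℕ)}
    {V : Finset (σ → ℝ)} {c : σ → ℝ} {r : ℝ} {k : ℕ} (hr : 0 < r) (hV : ∀ v ∈ V, ‖v - c‖ ≤ r)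
    (hT : ∀ e ∈ T, exponentVector e ∈ convexHull ℝ (V : Set (σ → ℝ)))
    (hk : 8 * r ^ 2 * Real.log (2 * Fintype.card σ) < k) :
    T.card ≤ V.card ^ k := by
  have hsample (e : σ →₀ ℕ) (he : e ∈ T) : ∃ u : Fin k → V,
      dist ((k : ℝ)⁻¹ • ∑ t, (u t : σ → ℝ)) (exponentVector e) < 1 / 2 :=
    exists_dist_inv_smul_sum_lt_of_mem_convexHull hr one_half_pos hV (hT e he) (by linarith)
  choose u hu using hsample
  calc T.card = Fintype.card T := (Fintype.card_coe T).symm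
    _ ≤ Fintype.card (Fin k → V) := Fintype.card_le_of_injective (fun e ↦ u e e.2)
        fun e e' h ↦ Subtype.ext <| eq_of_dist_exponentVector_lt_one <| by
          have h' := hu e' e'.2
          rw [← show u e e.2 = u e' e'.2 from h] at h'
          linarith [dist_triangle_left (exponentVector (e : σ →₀ ℕ))
            (exponentVector (e' : σ →₀ ℕ)) ((k : ℝ)⁻¹ • ∑ t, (u e e.2 t : σ → ℝ)), hu e e.2]
    _ = V.card ^ k := by simp

theorem ncard_exposedPoints_le_card_support_mul [CommSemiring R] [NoZeroDivisors R]
    {g h : MvPolynomial σ R} (hh : h ≠ 0) :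
    ((exponentVector '' (g.support : Set (σ →₀ ℕ))).exposedPoints ℝ).ncard ≤
      (g * h).support.card := by
  have key : ∀ x ∈ (exponentVector '' (g.support : Set (σ →₀ ℕ))).exposedPoints ℝ,
      ∃ a ∈ g.support, ∃ b ∈ h.support, exponentVector a = x ∧
        UniqueAdd g.support h.support a b := by
    rintro x ⟨⟨a, ha, rfl⟩, l, hl⟩
    let φ : (σ →₀ ℕ) →+ ℝ := l.toLinearMap.toAddMonoidHom.comp exponentVector
    obtain ⟨b, hb, hbmax⟩ := h.support.exists_max_image φ (support_nonempty.2 hh)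
    refine ⟨a, ha, b, hb, rfl, UniqueAdd.of_lt_of_le φ (fun a' ha' hne ↦ ?_) hbmax⟩
    obtain ⟨hle, hge⟩ := hl _ ⟨a', ha', rfl⟩
    exact hle.lt_of_ne fun heq ↦ hne (exponentVector_injective (hge heq.ge))
  choose! a ha b hb hxa hu using key
  rw [← Set.ncard_coe_finset]
  refine Set.ncard_le_ncard_of_injOn (fun x ↦ a x + b x) (fun x hx ↦ ?_) (fun x hx y hy hxy ↦ ?_)
  · have hcoeff : coeff (a x + b x) (g * h) = coeff (a x) g * coeff (b x) h :=
      AddMonoidAlgebra.coeff_mul_add_of_uniqueAdd (hu x hx)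
    rw [Finset.mem_coe, mem_support_iff, hcoeff]
    exact mul_ne_zero (mem_support_iff.1 (ha x hx)) (mem_support_iff.1 (hb x hx))
  · rw [← hxa x hx, ← hxa y hy, ((hu x hx) (ha y hy) (hb y hy) hxy.symm).1]

theorem card_support_le_card_support_mul_pow [Fintype σ] [CommSemiring R] [NoZeroDivisors R]
    {g h : MvPolynomial σ R} {d k : ℕ} (hh : h ≠ 0) (hd : 0 < d)
    (hdeg : ∀ i, degreeOf i g ≤ d) (hk : 2 * (d : ℝ) ^ 2 * Real.log (2 * Fintype.card σ) < k) :
    g.support.card ≤ (g * h).support.card ^ k := by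
  set A := exponentVector '' (g.support : Set (σ →₀ ℕ))
  have hA : A.Finite := g.support.finite_toSet.image _
  have hE : (A.exposedPoints ℝ).Finite := hA.subset exposedPoints_subset
  have hcube : ∀ v ∈ hE.toFinset, ‖v - fun _ ↦ (d : ℝ) / 2‖ ≤ d / 2 := by
    intro v hv
    obtain ⟨e, he, rfl⟩ := exposedPoints_subset (hE.mem_toFinset.1 hv)
    refine (pi_norm_le_iff_of_nonneg (by positivity)).2 fun i ↦ ?_
    have hei : (e i : ℝ) ≤ d := by exact_mod_cast (monomial_le_degreeOf i he).trans (hdeg i)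
    rw [Pi.sub_apply, exponentVector_apply, Real.norm_eq_abs, abs_le]
    constructor <;> linarith [(e i).cast_nonneg (α := ℝ)]
  calc g.support.card ≤ hE.toFinset.card ^ k :=
        card_le_card_pow_of_forall_mem_convexHull (by positivity) hcube
          (fun e he ↦ by simpa using hA.subset_convexHull_exposedPoints ⟨e, he, rfl⟩)
          (by linarith)
    _ ≤ (g * h).support.card ^ k := by
        gcongr
        rw [← Set.ncard_eq_toFinset_card _ hE]
        exact ncard_exposedPoints_le_card_support_mul hh

theorem card_support_le_card_support_mul_rpow [CommSemiring R] [NoZeroDivisors R] {n d : ℕ}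
    (hn : 2 ≤ n) (hd : 1 ≤ d) {g h : MvPolynomial (Fin n) R} (hgh : g * h ≠ 0)
    (hdeg : ∀ i, degreeOf i g ≤ d) :
    (g.support.card : ℝ) ≤ ((g * h).support.card : ℝ) ^ (6 * (d : ℝ) ^ 2 * Real.log n) := by
  obtain ⟨k, hk, hk'⟩ := exists_sample_size hn hd
  have hs : (1 : ℝ) ≤ (g * h).support.card := by
    exact_mod_cast Finset.card_pos.2 (support_nonempty.2 hgh)
  calc (g.support.card : ℝ) ≤ ((g * h).support.card : ℝ) ^ k := by
        exact_mod_cast card_support_le_card_support_mul_pow (right_ne_zero_of_mul hgh) hd hdeg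
          (by simpa using hk)
    _ = ((g * h).support.card : ℝ) ^ (k : ℝ) := (Real.rpow_natCast _ k).symm
    _ ≤ _ := Real.rpow_le_rpow_of_exponent_le hs hk'

theorem degreeOf_le_degreeOf_mul [CommSemiring R] [NoZeroDivisors R] {g h : MvPolynomial σ R}
    (hgh : g * h ≠ 0) (i : σ) : degreeOf i g ≤ degreeOf i (g * h) := by
  rw [degreeOf_mul_eq (left_ne_zero_of_mul hgh) (right_ne_zero_of_mul hgh)]
  exact Nat.le_add_right _ _

end MvPolynomial

/-- **Factor sparsity bound.** There is an absolute constant `C > 0` such that for every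
field `F`, every `n ≥ 2`, `d ≥ 1`, and polynomials `f = g * h` in `F[x_1, ..., x_n]` with
`f ≠ 0` and all individual degrees of `g` at most `d`, the sparsity of `g` is at most
`mon(f) ^ (C * d^2 * log n)`.  In particular every factor of an `s`-sparse polynomial of
individual degrees at most `d` has sparsity at most `s ^ (C * d^2 * log n)`. -/
theorem stmt0 :
    ∃ C : ℝ, 0 < C ∧
      (∀ (F : Type) [Field F] (n d : ℕ), 2 ≤ n → 1 ≤ d →
        ∀ f g h : MvPolynomial (Fin n) F, f = g * h → f ≠ 0 →
          (∀ i : Fin n, g.degreeOf i ≤ d) →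
          (g.support.card : ℝ) ≤ (f.support.card : ℝ) ^ (C * (d : ℝ)^2 * Real.log n)) ∧
      (∀ (F : Type) [Field F] (n d : ℕ), 2 ≤ n → 1 ≤ d →
        ∀ f g : MvPolynomial (Fin n) F, f ≠ 0 →
          (∀ i : Fin n, f.degreeOf i ≤ d) → g ∣ f →
          (g.support.card : ℝ) ≤ (f.support.card : ℝ) ^ (C * (d : ℝ)^2 * Real.log n)) := by
  refine ⟨6, by norm_num, ?_, ?_⟩
  · rintro F _ n d hn hd _ g h rfl hgh hdeg
    exact MvPolynomial.card_support_le_card_support_mul_rpow hn hd hgh hdeg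
  · rintro F _ n d hn hd _ g hgh hdeg ⟨h, rfl⟩
    exact MvPolynomial.card_support_le_card_support_mul_rpow hn hd hgh fun i ↦
      (MvPolynomial.degreeOf_le_degreeOf_mul hgh i).trans (hdeg i)
end

section
/- There exists an absolute constant C > 0 such that the following holds for all n ≥ 2 and d ≥ 1. Let E ⊆ {0, 1, ..., d}ⁿ ⊆ ℝⁿ be a nonempty finite set and let t be the number of extreme points (vertices) of the convex hull of E. Then t^(C·d²·log n) ≥ |E|. -/
/-!
Every point `z ∈ E` lies in the convex hull of the vertex set `V`, so it is the barycenter of a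
probability measure on `V`. Drawing `k ≈ 6 d² log n` independent samples from it, Hoeffding's
inequality and a union bound over the `n` coordinates produce `k` vertices whose sum is within `k/2`
of `k • z` in every coordinate (Maurey's empirical method). Since `z` is a lattice point, rounding
the sample mean recovers `z`, so `|E| ≤ |V| ^ k`.
-/

open MeasureTheory ProbabilityTheory Real
open scoped NNReal

theorem round_div_eq_of_abs_sub_lt {α : Type*} [Field α] [LinearOrder α] [IsStrictOrderedRing α]
    [FloorRing α] {s k : α} {m : ℤ} (h : |s - k * m| < k / 2) : round (s / k) = m := by
  have hk : 0 < k := by linarith [abs_nonneg (s - k * m)]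
  rw [round_eq_iff, Set.mem_Ico, le_div_iff₀ hk, div_lt_iff₀ hk]
  constructor <;> linarith [abs_lt.1 h]

theorem convexHull_extremePoints_convexHull_of_finite {E : Type*} [AddCommGroup E] [Module ℝ E]
    [TopologicalSpace E] [T2Space E] [IsTopologicalAddGroup E] [ContinuousSMul ℝ E]
    [LocallyConvexSpace ℝ E] {s : Set E} (hs : s.Finite) :
    convexHull ℝ ((convexHull ℝ s).extremePoints ℝ) = convexHull ℝ s := by
  have hfin : ((convexHull ℝ s).extremePoints ℝ).Finite := hs.subset extremePoints_convexHull_subset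
  rw [← (hfin.isClosed_convexHull (𝕜 := ℝ)).closure_eq]
  exact closure_convexHull_extremePoints (hs.isCompact_convexHull (𝕜 := ℝ)) (convex_convexHull ℝ s)

theorem exists_isProbabilityMeasure_integral_eq_of_mem_convexHull {E : Type*}
    [NormedAddCommGroup E] [NormedSpace ℝ E] [CompleteSpace E] [MeasurableSpace E]
    [MeasurableSingletonClass E]
    {s : Finset E} {z : E} (hz : z ∈ convexHull ℝ (s : Set E)) :
    ∃ ν : Measure E, IsProbabilityMeasure ν ∧ (∀ᵐ x ∂ν, x ∈ s) ∧ ∫ x, x ∂ν = z := by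
  rw [Finset.convexHull_eq] at hz
  obtain ⟨w, hw₀, hw₁, rfl⟩ := hz
  refine ⟨∑ y ∈ s, ENNReal.ofReal (w y) • Measure.dirac y, ⟨?_⟩, ?_, ?_⟩
  · simp [← ENNReal.ofReal_sum_of_nonneg hw₀, hw₁]
  · rw [ae_iff, Measure.finsetSum_apply]
    refine Finset.sum_eq_zero fun y hy => ?_
    simp [hy]
  · rw [integral_finsetSum_measure fun y _ => (integrable_dirac (by simp)).smul_measure (by simp),
      Finset.centerMass_eq_of_sum_1 _ _ hw₁]
    refine Finset.sum_congr rfl fun y hy => ?_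
    rw [integral_smul_measure, integral_dirac, ENNReal.toReal_ofReal (hw₀ y hy), id]

theorem measure_abs_sum_ge_le_of_iIndepFun {Ω ι : Type*} {mΩ : MeasurableSpace Ω}
    {μ : Measure Ω} {X : ι → Ω → ℝ} (h_indep : iIndepFun X μ) {c : ι → ℝ≥0}
    {s : Finset ι} (h_subG : ∀ i ∈ s, HasSubgaussianMGF (X i) (c i) μ) {ε : ℝ} (hε : 0 ≤ ε) :
    μ.real {ω | ε ≤ |∑ i ∈ s, X i ω|} ≤ 2 * exp (-ε ^ 2 / (2 * ∑ i ∈ s, c i)) := by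
  have hsum := HasSubgaussianMGF.sum_of_iIndepFun h_indep h_subG
  have hsplit : {ω | ε ≤ |∑ i ∈ s, X i ω|}
      = {ω | ε ≤ ∑ i ∈ s, X i ω} ∪ {ω | ε ≤ (-fun ω ↦ ∑ i ∈ s, X i ω) ω} := by
    ext ω
    simp only [le_abs', Set.mem_ofPred_eq, Set.mem_union, Pi.neg_apply, le_neg]
    tauto
  rw [hsplit]
  linarith [measureReal_union_le (μ := μ) {ω | ε ≤ ∑ i ∈ s, X i ω}
    {ω | ε ≤ (-fun ω ↦ ∑ i ∈ s, X i ω) ω}, hsum.measure_ge_le hε, hsum.neg.measure_ge_le hε]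

theorem measure_abs_sum_sub_integral_ge_le {α : Type*} {mα : MeasurableSpace α}
    {ν : Measure α} [IsProbabilityMeasure ν] {X : α → ℝ} {a b ε : ℝ} (k : ℕ)
    (hX : AEMeasurable X ν) (hab : ∀ᵐ x ∂ν, X x ∈ Set.Icc a b) (hε : 0 ≤ ε) :
    (Measure.pi fun _ : Fin k => ν).real {ω | ε ≤ |∑ j, X (ω j) - k * ∫ x, X x ∂ν|}
      ≤ 2 * exp (-(2 * ε ^ 2 / (k * (b - a) ^ 2))) := by
  have hsubG (j : Fin k) : HasSubgaussianMGF (fun ω : Fin k → α => X (ω j) - ∫ x, X x ∂ν)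
      ((‖b - a‖₊ / 2) ^ 2) (Measure.pi fun _ => ν) := by
    refine HasSubgaussianMGF.of_map (X := fun x => X x - ∫ x, X x ∂ν)
      (measurable_pi_apply j).aemeasurable ?_
    rw [(measurePreserving_eval _ j).map_eq]
    exact hasSubgaussianMGF_of_mem_Icc hX hab
  have h := measure_abs_sum_ge_le_of_iIndepFun
    (iIndepFun_pi (X := fun _ x => X x - ∫ x, X x ∂ν) fun _ => hX.sub_const _)
    (s := Finset.univ) (fun j _ => hsubG j) hε
  simp only [Finset.sum_sub_distrib, Finset.sum_const, Finset.card_univ, Fintype.card_fin,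
    nsmul_eq_mul, NNReal.coe_mul, NNReal.coe_natCast, NNReal.coe_pow, NNReal.coe_div,
    coe_nnnorm, Real.norm_eq_abs, NNReal.coe_ofNat] at h
  refine h.trans_eq ?_
  rw [div_pow, sq_abs]
  generalize (b - a) ^ 2 = D
  ring_nf

theorem exists_sample_abs_sum_sub_integral_lt {ι : Type*} [Fintype ι] {ν : Measure (ι → ℝ)}
    [IsProbabilityMeasure ν] {S : Set (ι → ℝ)} {a b ε : ℝ} (k : ℕ) (hS : ∀ᵐ x ∂ν, x ∈ S)
    (hab : ∀ x ∈ S, ∀ i, x i ∈ Set.Icc a b) (hε : 0 ≤ ε)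
    (hk : 2 * Fintype.card ι < exp (2 * ε ^ 2 / (k * (b - a) ^ 2))) :
    ∃ g : Fin k → ι → ℝ, (∀ j, g j ∈ S) ∧ ∀ i, |∑ j, g j i - k * (∫ x, x ∂ν) i| < ε := by
  set μ := Measure.pi fun _ : Fin k => ν
  set δ := exp (-(2 * ε ^ 2 / (k * (b - a) ^ 2)))
  have hcoord (i : ι) : ∀ᵐ x ∂ν, x i ∈ Set.Icc a b := hS.mono fun x hx => hab x hx i
  have hmean : ∫ x, x ∂ν = fun i => ∫ x, x i ∂ν := funext <| eval_integral fun i =>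
    Integrable.of_mem_Icc a b (measurable_pi_apply i).aemeasurable (hcoord i)
  have hnull : μ.real {ω | ¬ ∀ j, ω j ∈ S} = 0 := by
    have hae : ∀ᵐ ω ∂μ, ∀ j, ω j ∈ S :=
      ae_all_iff.2 fun j => (measurePreserving_eval _ j).quasiMeasurePreserving.ae hS
    rw [measureReal_def, ae_iff.1 hae, ENNReal.toReal_zero]
  by_contra! hbad
  set B := fun i => {ω : Fin k → ι → ℝ | ε ≤ |∑ j, ω j i - k * (∫ x, x ∂ν) i|}
  have hcover : Set.univ ⊆ (⋃ i, B i) ∪ {ω | ¬ ∀ j, ω j ∈ S} := by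
    intro ω _
    by_cases hω : ∀ j, ω j ∈ S
    · exact Or.inl (Set.mem_iUnion.2 (hbad ω hω))
    · exact Or.inr hω
  have := calc (1 : ℝ) = μ.real Set.univ := by simp
    _ ≤ μ.real (⋃ i, B i) + μ.real {ω | ¬ ∀ j, ω j ∈ S} :=
      (measureReal_mono hcover).trans (measureReal_union_le _ _)
    _ ≤ ∑ i, μ.real (B i) := by
      rw [hnull, add_zero]
      exact measureReal_iUnion_fintype_le _
    _ ≤ ∑ _i : ι, 2 * δ := Finset.sum_le_sum fun i _ => by
      simpa only [B, hmean] using measure_abs_sum_sub_integral_ge_le k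
        (measurable_pi_apply i).aemeasurable (hcoord i) hε
    _ = 2 * Fintype.card ι * δ := by
      rw [Finset.sum_const, Finset.card_univ, nsmul_eq_mul]; ring
    _ < exp (2 * ε ^ 2 / (k * (b - a) ^ 2)) * δ := by gcongr
    _ = 1 := by rw [← exp_add, add_neg_cancel, exp_zero]
  exact this.false

theorem card_le_card_pow_of_subset_convexHull {ι : Type*} [Fintype ι]
    {E V : Finset (ι → ℝ)} {a b : ℝ} {k : ℕ} (hk₀ : 0 < k)
    (hk : 2 * Fintype.card ι < exp (k / (2 * (b - a) ^ 2)))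
    (hE : ∀ x ∈ E, ∀ i, ∃ m : ℤ, x i = m) (hV : ∀ x ∈ V, ∀ i, x i ∈ Set.Icc a b)
    (hEV : (E : Set (ι → ℝ)) ⊆ convexHull ℝ V) :
    E.card ≤ V.card ^ k := by
  have hk' : 2 * Fintype.card ι < exp (2 * ((k : ℝ) / 2) ^ 2 / (k * (b - a) ^ 2)) := by
    convert hk using 2
    field_simp
  calc E.card ≤ ((Fintype.piFinset fun _ : Fin k => V).image
        fun g i => (round ((∑ j, g j i) / (k : ℝ)) : ℝ)).card := by
        refine Finset.card_le_card fun z hz => ?_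
        obtain ⟨ν, _, hνV, hνz⟩ :=
          exists_isProbabilityMeasure_integral_eq_of_mem_convexHull (hEV hz)
        obtain ⟨g, hgV, hg⟩ := exists_sample_abs_sum_sub_integral_lt k hνV hV (by positivity) hk'
        refine Finset.mem_image.2 ⟨g, Fintype.mem_piFinset.2 hgV, funext fun i => ?_⟩
        obtain ⟨m, hm⟩ := hE z hz i
        have hgi := hg i
        rw [hνz, hm] at hgi
        rw [round_div_eq_of_abs_sub_lt hgi, hm]
    _ ≤ (Fintype.piFinset fun _ : Fin k => V).card := Finset.card_image_le
    _ = V.card ^ k := by simp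

theorem exists_nat_le_mul_log_and_lt_exp {n : ℕ} (hn : 2 ≤ n) {D : ℝ} (hD : 1 ≤ D) :
    ∃ k : ℕ, 0 < k ∧ (k : ℝ) ≤ 8 * D * log n ∧ 2 * n < exp (k / (2 * D)) := by
  have hn' : (2 : ℝ) ≤ n := by exact_mod_cast hn
  have hlog : 1 / 2 < log n := by
    have := Real.log_two_gt_d9
    linarith [Real.log_le_log (by norm_num) hn']
  refine ⟨⌈6 * D * log n⌉₊, Nat.ceil_pos.2 (by positivity), ?_, ?_⟩
  · nlinarith [Nat.ceil_lt_add_one (by positivity : 0 ≤ 6 * D * log n)]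
  · calc (2 * n : ℝ) < n ^ 3 := by nlinarith [mul_le_mul hn' hn' (by norm_num) (by positivity)]
      _ = exp (log n) ^ 3 := by rw [exp_log (by positivity)]
      _ = exp (3 * log n) := by rw [← exp_nat_mul]; norm_num
      _ ≤ exp (⌈6 * D * log n⌉₊ / (2 * D)) := by
        gcongr
        rw [le_div_iff₀ (by positivity)]
        nlinarith [Nat.le_ceil (6 * D * log n)]

/-- **Vertices of convex hulls of subsets of `{0, 1, ..., d}ⁿ`.** There is an absolute
constant `C > 0` such that for all `n ≥ 2`, `d ≥ 1`, and every nonempty finite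
`E ⊆ {0, 1, ..., d}ⁿ ⊆ ℝⁿ`, if `t` is the number of extreme points of the convex hull
of `E`, then `t ^ (C * d² * log n) ≥ |E|`. -/
theorem stmt2 :
    ∃ C : ℝ, 0 < C ∧
      ∀ (n d : ℕ), 2 ≤ n → 1 ≤ d →
        ∀ E : Finset (Fin n → ℝ), E.Nonempty →
          (∀ x ∈ E, ∀ i : Fin n, ∃ m : ℕ, m ≤ d ∧ x i = (m : ℝ)) →
          (E.card : ℝ) ≤
            ((Set.extremePoints ℝ (convexHull ℝ (E : Set (Fin n → ℝ)))).ncard : ℝ) ^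
              (C * (d : ℝ)^2 * Real.log n) := by
  refine ⟨8, by norm_num, fun n d hn hd E hE hlat => ?_⟩
  set S := (convexHull ℝ (E : Set (Fin n → ℝ))).extremePoints ℝ
  have hSE : S ⊆ E := extremePoints_convexHull_subset
  have hS : S.Finite := E.finite_toSet.subset hSE
  have hEV : (E : Set (Fin n → ℝ)) ⊆ convexHull ℝ hS.toFinset := by
    rw [hS.coe_toFinset, convexHull_extremePoints_convexHull_of_finite E.finite_toSet]
    exact subset_convexHull ℝ _
  have hV : ∀ x ∈ hS.toFinset, ∀ i, x i ∈ Set.Icc (0 : ℝ) d := by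
    intro x hx i
    obtain ⟨m, hmd, hm⟩ := hlat x (hSE (hS.mem_toFinset.1 hx)) i
    exact hm ▸ ⟨m.cast_nonneg, by exact_mod_cast hmd⟩
  have hd' : (1 : ℝ) ≤ (d : ℝ) ^ 2 := one_le_pow₀ (by exact_mod_cast hd)
  obtain ⟨k, hk₀, hkC, hk⟩ := exists_nat_le_mul_log_and_lt_exp hn hd'
  have hcard := card_le_card_pow_of_subset_convexHull hk₀ (by simpa using hk)
    (fun x hx i => (hlat x hx i).elim fun m hm => ⟨m, by simp [hm.2]⟩) hV hEV
  obtain ⟨z, hz⟩ := hE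
  have hV₁ : 1 ≤ hS.toFinset.card :=
    Finset.card_pos.2 (Finset.coe_nonempty.1 (convexHull_nonempty_iff.1 ⟨z, hEV hz⟩))
  rw [Set.ncard_eq_toFinset_card S hS]
  calc (E.card : ℝ) ≤ (hS.toFinset.card : ℝ) ^ (k : ℝ) := by
        rw [Real.rpow_natCast]; exact_mod_cast hcard
    _ ≤ _ := Real.rpow_le_rpow_of_exponent_le (by exact_mod_cast hV₁) hkC
end

section
/- Let A and B be nonempty finite subsets of ℝⁿ, and let P₁ = conv(A), P₂ = conv(B) be their convex hulls. Then the Minkowski sum P₁ + P₂ equals the convex hull of the finite set A + B = {a + b : a ∈ A, b ∈ B} (in particular it is a polytope), and the number of extreme points of P₁ + P₂ is at least the maximum of the number of extreme points of P₁ and the number of extreme points of P₂. -/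
/-!
Every vertex `p` of the polytope `conv A` is exposed by some linear functional `l`. The face of
`conv A + conv B` exposed by `l` is `p + F`, where `F` is the face of `conv B` exposed by `l`, so
`p + q` is a vertex of the sum for any vertex `q` of `F`. A vertex of a Minkowski sum has a unique
decomposition, hence `p ↦ p + q` is injective, and the sum has finitely many vertices since they
all lie in `A + B`.
-/

open scoped Pointwise

open Set

theorem eq_and_eq_of_add_eq_add_of_mem_extremePoints_add {𝕜 E : Type*} [Field 𝕜] [LinearOrder 𝕜]
    [IsStrictOrderedRing 𝕜] [AddCommGroup E] [Module 𝕜 E] {s t : Set E} {x x' y y' : E}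
    (hx : x ∈ s) (hx' : x' ∈ s) (hy : y ∈ t) (hy' : y' ∈ t)
    (hext : x + y ∈ (s + t).extremePoints 𝕜) (h : x + y = x' + y') : x = x' ∧ y = y' := by
  have hmid : x + y ∈ openSegment 𝕜 (x + y') (x' + y) :=
    ⟨1 / 2, 1 / 2, by norm_num, by norm_num, by norm_num, by
      linear_combination (norm := module) (-(1 / 2 : 𝕜)) • h⟩
  obtain rfl : y = y' :=
    (add_left_cancel (hext.2 (add_mem_add hx hy') (add_mem_add hx' hy) hmid)).symm
  exact ⟨add_right_cancel h, rfl⟩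

theorem ContinuousLinearMap.add_mem_toExposed_add_iff {𝕜 E : Type*} [TopologicalSpace 𝕜] [Ring 𝕜]
    [PartialOrder 𝕜] [IsOrderedAddMonoid 𝕜] [AddCommGroup E] [TopologicalSpace E] [Module 𝕜 E]
    {l : StrongDual 𝕜 E} {s t : Set E} {a b : E} (ha : a ∈ s) (hb : b ∈ t) :
    a + b ∈ l.toExposed (s + t) ↔ a ∈ l.toExposed s ∧ b ∈ l.toExposed t := by
  refine ⟨fun h => ⟨⟨ha, fun a' ha' => ?_⟩, ⟨hb, fun b' hb' => ?_⟩⟩, fun ⟨hsa, htb⟩ => ?_⟩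
  · simpa using h.2 (a' + b) (add_mem_add ha' hb)
  · simpa using h.2 (a + b') (add_mem_add ha hb')
  · refine ⟨add_mem_add ha hb, ?_⟩
    rintro _ ⟨a', ha', b', hb', rfl⟩
    simpa using add_le_add (hsa.2 a' ha') (htb.2 b' hb')

theorem le_and_eq_of_mem_convexJoin_singleton {F : Type*} [AddCommGroup F] [Module ℝ F]
    {f : F →ₗ[ℝ] ℝ} {x y : F} {C : Set F} (hC : ∀ z ∈ C, f z < f x)
    (hy : y ∈ convexJoin ℝ {x} C) : f y ≤ f x ∧ (f x ≤ f y → y = x) := by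
  rw [convexJoin_singleton_left, mem_iUnion₂] at hy
  obtain ⟨z, hz, a, b, ha, hb, hab, rfl⟩ := hy
  have hfy : f (a • x + b • z) = f x - b * (f x - f z) := by
    rw [map_add, map_smul, map_smul, smul_eq_mul, smul_eq_mul, eq_sub_of_add_eq hab]; ring
  have hgap : 0 < f x - f z := sub_pos.2 (hC z hz)
  refine ⟨by rw [hfy]; nlinarith, fun hle => ?_⟩
  obtain rfl : b = 0 := by rw [hfy] at hle; nlinarith
  rw [add_zero] at hab
  rw [hab, one_smul, zero_smul, add_zero]

section LocallyConvex

variable {E : Type*} [AddCommGroup E] [Module ℝ E] [TopologicalSpace E] [T2Space E]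
  [IsTopologicalAddGroup E] [ContinuousSMul ℝ E] [LocallyConvexSpace ℝ E]

theorem exists_add_mem_extremePoints_add {P Q : Set E} {p : E} (hp : p ∈ P.exposedPoints ℝ)
    (hQ : IsCompact Q) (hQne : Q.Nonempty) : ∃ q ∈ Q, p + q ∈ (P + Q).extremePoints ℝ := by
  obtain ⟨hpP, l, hl⟩ := hp
  have hface_P : ∀ x ∈ l.toExposed P, x = p := fun x hx => (hl x hx.1).2 (hx.2 p hpP)
  have hp_face : p ∈ l.toExposed P := ⟨hpP, fun x hx => (hl x hx).1⟩
  have hface_Q_ne : (l.toExposed Q).Nonempty := by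
    obtain ⟨q, hq, hmax⟩ := hQ.exists_isMaxOn hQne l.continuous.continuousOn
    exact ⟨q, hq, hmax⟩
  obtain ⟨q, hq⟩ := (ContinuousLinearMap.toExposed.isExposed.isCompact hQ).extremePoints_nonempty
    hface_Q_ne
  have hpq_face : p + q ∈ l.toExposed (P + Q) :=
    (l.add_mem_toExposed_add_iff hpP hq.1.1).2 ⟨hp_face, hq.1⟩
  refine ⟨q, hq.1.1, hpq_face.1, ?_⟩
  intro u hu v hv hpq
  have hface : IsExtreme ℝ (P + Q) (l.toExposed (P + Q)) :=
    ContinuousLinearMap.toExposed.isExposed.isExtreme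
  have hu_face := hface.left_mem_of_mem_openSegment hu hv hpq_face hpq
  have hv_face := hface.left_mem_of_mem_openSegment hv hu hpq_face (openSegment_symm ℝ u v ▸ hpq)
  obtain ⟨u₁, hu₁, u₂, hu₂, rfl⟩ := hu
  obtain ⟨v₁, hv₁, v₂, hv₂, rfl⟩ := hv
  obtain ⟨hu₁_face, hu₂_face⟩ := (l.add_mem_toExposed_add_iff hu₁ hu₂).1 hu_face
  obtain ⟨hv₁_face, hv₂_face⟩ := (l.add_mem_toExposed_add_iff hv₁ hv₂).1 hv_face
  rw [hface_P u₁ hu₁_face, hface_P v₁ hv₁_face, mem_openSegment_translate] at hpq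
  rw [hface_P u₁ hu₁_face, hq.2 hu₂_face hv₂_face hpq]

theorem Set.Finite.extremePoints_convexHull_subset_exposedPoints_s3 {s : Set E} (hs : s.Finite) :
    (convexHull ℝ s).extremePoints ℝ ⊆ (convexHull ℝ s).exposedPoints ℝ := by
  intro x hx
  have hxs : x ∈ s := extremePoints_convexHull_subset hx
  have hx_notMem : x ∉ convexHull ℝ (s \ {x}) := fun hmem =>
    ((convex_convexHull ℝ s).mem_extremePoints_iff_mem_sdiff_convexHull_sdiff.1 hx).2
      (convexHull_mono (sdiff_subset_sdiff_left (subset_convexHull ℝ s)) hmem)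
  obtain ⟨l, u, hlu, hux⟩ := geometric_hahn_banach_closed_point (convex_convexHull ℝ _)
    ((hs.sdiff.isCompact_convexHull ℝ).isClosed) hx_notMem
  refine ⟨extremePoints_subset hx, l, fun y hy => ?_⟩
  rcases (s \ {x}).eq_empty_or_nonempty with hempty | hne
  · obtain rfl : y = x := by
      have hsub : s ⊆ {x} := sdiff_eq_empty.1 hempty
      simpa using convexHull_mono hsub hy
    exact ⟨le_rfl, fun _ => rfl⟩
  · rw [← insert_sdiff_self_of_mem hxs, convexHull_insert hne] at hy
    exact le_and_eq_of_mem_convexJoin_singleton (f := (l : E →ₗ[ℝ] ℝ))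
      (fun z hz => (hlu z hz).trans hux) hy

theorem ncard_extremePoints_convexHull_le_add {s t : Set E} (hs : s.Finite) (ht : t.Finite)
    (ht_ne : t.Nonempty) :
    ((convexHull ℝ s).extremePoints ℝ).ncard ≤
      ((convexHull ℝ s + convexHull ℝ t).extremePoints ℝ).ncard := by
  have hsum : ∀ p ∈ (convexHull ℝ s).extremePoints ℝ,
      ∃ q ∈ convexHull ℝ t, p + q ∈ (convexHull ℝ s + convexHull ℝ t).extremePoints ℝ :=
    fun _ hp => exists_add_mem_extremePoints_add
      (hs.extremePoints_convexHull_subset_exposedPoints_s3 hp) (ht.isCompact_convexHull ℝ)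
      ht_ne.convexHull
  choose! g hg_mem hg_ext using hsum
  have hfin : ((convexHull ℝ s + convexHull ℝ t).extremePoints ℝ).Finite := by
    rw [← convexHull_add]
    exact (hs.add ht).subset extremePoints_convexHull_subset
  refine ncard_le_ncard_of_injOn (fun p => p + g p) hg_ext (fun p hp p' hp' h => ?_) hfin
  exact (eq_and_eq_of_add_eq_add_of_mem_extremePoints_add (extremePoints_subset hp)
    (extremePoints_subset hp') (hg_mem p hp) (hg_mem p' hp') (hg_ext p hp) h).1

end LocallyConvex

/-- **Minkowski sums of polytopes.** For nonempty finite `A, B ⊆ ℝⁿ` with convex hulls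
`P₁ = conv(A)` and `P₂ = conv(B)`, the Minkowski sum `P₁ + P₂` equals the convex hull of
the finite set `A + B` (so it is a polytope), and the number of extreme points of
`P₁ + P₂` is at least the maximum of the numbers of extreme points of `P₁` and `P₂`. -/
theorem stmt3 {n : ℕ} (A B : Finset (Fin n → ℝ)) (hA : A.Nonempty) (hB : B.Nonempty) :
    convexHull ℝ (A : Set (Fin n → ℝ)) + convexHull ℝ (B : Set (Fin n → ℝ)) =
      convexHull ℝ ((A : Set (Fin n → ℝ)) + (B : Set (Fin n → ℝ))) ∧
    max ((Set.extremePoints ℝ (convexHull ℝ (A : Set (Fin n → ℝ)))).ncard)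
        ((Set.extremePoints ℝ (convexHull ℝ (B : Set (Fin n → ℝ)))).ncard) ≤
      (Set.extremePoints ℝ
        (convexHull ℝ (A : Set (Fin n → ℝ)) + convexHull ℝ (B : Set (Fin n → ℝ)))).ncard := by
  refine ⟨(convexHull_add _ _).symm, max_le ?_ ?_⟩
  · exact ncard_extremePoints_convexHull_le_add A.finite_toSet B.finite_toSet hB
  · rw [add_comm]
    exact ncard_extremePoints_convexHull_le_add B.finite_toSet A.finite_toSet hA
end

section
/- Let F be a field and let f, g, h be nonzero polynomials in F[x_1, ..., x_n] with f = g·h. Then the Newton polytope of f equals the Minkowski sum of the Newton polytope of g and the Newton polytope of h: P_f = P_g + P_h. -/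
/-! The support of `g * h` lies in `supp g + supp h`, so `P_{gh} ⊆ P_g + P_h`. Conversely,
`P_g + P_h` is the convex hull of its finitely many extreme points, and an extreme point of a
Minkowski sum splits in only one way as a sum of points of the summands. Hence the coefficient
of `g * h` at an extreme point is a single product of nonzero coefficients of `g` and `h`, so
every extreme point of `P_g + P_h` lies in `P_{gh}`. -/

open scoped Pointwise

/-- The Newton polytope of a nonzero polynomial `f ∈ F[x_1, ..., x_n]`: the convex hull in
`ℝⁿ` of the set of exponent vectors of monomials of `f` with nonzero coefficient. -/
noncomputable def newtonPolytope {F : Type*} [Field F] {n : ℕ}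
    (f : MvPolynomial (Fin n) F) : Set (Fin n → ℝ) :=
  convexHull ℝ ((fun m : Fin n →₀ ℕ => fun i : Fin n => (m i : ℝ)) ''
    (f.support : Set (Fin n →₀ ℕ)))

section Convex

variable {E : Type*} [AddCommGroup E] [Module ℝ E]

theorem eq_and_eq_of_add_eq_add_of_mem_extremePoints_add_s5 {A B : Set E} {a a' b b' : E}
    (hx : a + b ∈ (A + B).extremePoints ℝ) (ha : a ∈ A) (hb : b ∈ B) (ha' : a' ∈ A)
    (hb' : b' ∈ B) (heq : a' + b' = a + b) : a' = a ∧ b' = b := by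
  have hmid : a + b ∈ segment ℝ (a + b') (a' + b) := by
    refine ⟨1 / 2, 1 / 2, by norm_num, by norm_num, by norm_num, ?_⟩
    rw [← smul_add, show a + b' + (a' + b) = (a + b) + (a' + b') by abel, heq, ← two_smul ℝ,
      smul_smul]
    norm_num
  rcases (mem_extremePoints_iff_forall_segment.1 hx).2 _ (Set.add_mem_add ha hb')
    _ (Set.add_mem_add ha' hb) hmid with h | h
  · have hb_eq : b' = b := add_left_cancel h
    exact ⟨add_right_cancel (hb_eq ▸ heq), hb_eq⟩
  · have ha_eq : a' = a := add_right_cancel h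
    exact ⟨ha_eq, add_left_cancel (ha_eq ▸ heq)⟩

variable [TopologicalSpace E] [T2Space E] [IsTopologicalAddGroup E] [ContinuousSMul ℝ E]
  [LocallyConvexSpace ℝ E]

theorem Set.Finite.convexHull_extremePoints_convexHull {S : Set E} (hS : S.Finite) :
    convexHull ℝ ((convexHull ℝ S).extremePoints ℝ) = convexHull ℝ S := by
  have hclosed : IsClosed (convexHull ℝ ((convexHull ℝ S).extremePoints ℝ)) :=
    (hS.subset extremePoints_convexHull_subset).isClosed_convexHull (𝕜 := ℝ)
  simpa only [hclosed.closure_eq] using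
    closure_convexHull_extremePoints (hS.isCompact_convexHull (𝕜 := ℝ)) (convex_convexHull ℝ S)

end Convex

section ExponentVector

variable {σ : Type*}

noncomputable def exponentVector (σ : Type*) : (σ →₀ ℕ) →+ (σ → ℝ) where
  toFun m i := m i
  map_zero' := by ext; simp
  map_add' _ _ := by ext; simp

@[simp]
theorem exponentVector_apply (m : σ →₀ ℕ) (i : σ) : exponentVector σ m i = m i :=
  rfl

theorem exponentVector_injective : Function.Injective (exponentVector σ) :=
  fun _ _ h => Finsupp.ext fun i => by simpa using congrFun h i

theorem uniqueAdd_of_mem_extremePoints {A B : Finset (σ →₀ ℕ)} {a b : σ →₀ ℕ}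
    (ha : a ∈ A) (hb : b ∈ B)
    (hx : exponentVector σ (a + b) ∈ (convexHull ℝ (exponentVector σ '' A) +
      convexHull ℝ (exponentVector σ '' B)).extremePoints ℝ) :
    UniqueAdd A B a b := by
  intro a' b' ha' hb' heq
  have hmem {S : Finset (σ →₀ ℕ)} {m} (hm : m ∈ S) :
      exponentVector σ m ∈ convexHull ℝ (exponentVector σ '' S) :=
    subset_convexHull ℝ _ ⟨m, hm, rfl⟩
  rw [map_add] at hx
  have := eq_and_eq_of_add_eq_add_of_mem_extremePoints_add_s5 hx (hmem ha) (hmem hb)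
    (hmem ha') (hmem hb') (by rw [← map_add, ← map_add, heq])
  exact ⟨exponentVector_injective this.1, exponentVector_injective this.2⟩

variable {R : Type*} [CommSemiring R] [NoZeroDivisors R]

theorem extremePoints_add_subset_image_support_mul (g h : MvPolynomial σ R) :
    (convexHull ℝ (exponentVector σ '' g.support) +
      convexHull ℝ (exponentVector σ '' h.support)).extremePoints ℝ ⊆
      exponentVector σ '' (g * h).support := by
  intro x hx
  have hx_mem : x ∈ exponentVector σ '' (g.support + h.support : Set (σ →₀ ℕ)) := by
    rw [Set.image_add]
    refine extremePoints_convexHull_subset (𝕜 := ℝ) ?_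
    rwa [convexHull_add]
  obtain ⟨_, ⟨a, ha, b, hb, rfl⟩, rfl⟩ := hx_mem
  have hcoeff : (g * h).coeff (a + b) = g.coeff a * h.coeff b :=
    AddMonoidAlgebra.coeff_mul_add_of_uniqueAdd (uniqueAdd_of_mem_extremePoints ha hb hx)
  refine ⟨a + b, ?_, rfl⟩
  rw [Finset.mem_coe, MvPolynomial.mem_support_iff, hcoeff]
  exact mul_ne_zero (MvPolynomial.mem_support_iff.1 ha) (MvPolynomial.mem_support_iff.1 hb)

end ExponentVector

theorem newtonPolytope_eq_convexHull {F : Type*} [Field F] {n : ℕ} (f : MvPolynomial (Fin n) F) :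
    newtonPolytope f = convexHull ℝ (exponentVector (Fin n) '' f.support) :=
  rfl

theorem newtonPolytope_mul {F : Type*} [Field F] {n : ℕ} (g h : MvPolynomial (Fin n) F) :
    newtonPolytope (g * h) = newtonPolytope g + newtonPolytope h := by
  classical
  let φ := exponentVector (Fin n)
  have hfin : (φ '' g.support + φ '' h.support).Finite :=
    ((g.support.finite_toSet.image φ).add (h.support.finite_toSet.image φ))
  have hsupp : φ '' (g * h).support ⊆ φ '' g.support + φ '' h.support := by
    rw [← Set.image_add, ← Finset.coe_add]
    exact Set.image_mono (MvPolynomial.support_mul g h)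
  simp only [newtonPolytope_eq_convexHull, ← convexHull_add]
  refine (convexHull_mono hsupp).antisymm ?_
  rw [← hfin.convexHull_extremePoints_convexHull, convexHull_add]
  exact convexHull_mono (extremePoints_add_subset_image_support_mul g h)

theorem stmt5_general {F : Type*} [Field F] {n : ℕ} (f g h : MvPolynomial (Fin n) F)
    (hfgh : f = g * h) :
    newtonPolytope f = newtonPolytope g + newtonPolytope h := by
  subst hfgh
  exact newtonPolytope_mul g h

/-- **Ostrowski's theorem.** If `f = g * h` with `f, g, h` nonzero, then the Newton polytope
of `f` is the Minkowski sum of the Newton polytopes of `g` and `h`. -/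
theorem stmt5 {F : Type*} [Field F] {n : ℕ} (f g h : MvPolynomial (Fin n) F)
    (hf : f ≠ 0) (hg : g ≠ 0) (hh : h ≠ 0) (hfgh : f = g * h) :
    newtonPolytope f = newtonPolytope g + newtonPolytope h :=
  stmt5_general f g h hfgh
end

section
/- Let F be a field and let g ∈ F[x_1, ..., x_n] be a multilinear polynomial, i.e., the individual degree of every variable in g is at most 1. If f = g·h for some polynomial h ∈ F[x_1, ..., x_n] and f ≠ 0, then mon(f) ≥ mon(g). -/
/-!
Induct on the number of variables, viewing `g` and `h` as polynomials `G = g₀ + g₁ X` and `H` in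
the variable `X = x₀` over the remaining ones. If `t` is the trailing and `d` the leading
exponent of `H`, then the coefficients of `G * H` at `X ^ t` and `X ^ (d + 1)` are `g₀ * H_t` and
`g₁ * H_d`. These are distinct coefficients, and by induction they have at least as many
monomials as `g₀` and `g₁`, which together have as many monomials as `g`.
-/

open Polynomial

namespace Polynomial

variable {R : Type*} [Semiring R]

theorem coeff_mul_natTrailingDegree_right (p q : R[X]) :
    (p * q).coeff q.natTrailingDegree = p.coeff 0 * q.coeff q.natTrailingDegree := by
  rw [coeff_mul, Finset.sum_eq_single (0, q.natTrailingDegree)]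
  · rintro ⟨i, j⟩ hij hne
    rw [Finset.HasAntidiagonal.mem_antidiagonal] at hij
    rw [coeff_eq_zero_of_lt_natTrailingDegree (p := q) (by grind), mul_zero]
  · simp

theorem coeff_mul_natDegree_add_one_of_natDegree_le_one {p : R[X]} (q : R[X])
    (hp : p.natDegree ≤ 1) :
    (p * q).coeff (q.natDegree + 1) = p.coeff 1 * q.coeff q.natDegree := by
  rw [coeff_mul, Finset.sum_eq_single (1, q.natDegree)]
  · rintro ⟨i, j⟩ hij hne
    rw [Finset.HasAntidiagonal.mem_antidiagonal] at hij
    obtain hi | hi : i = 0 ∨ 2 ≤ i := by grind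
    · rw [coeff_eq_zero_of_natDegree_lt (p := q) (by omega), mul_zero]
    · rw [coeff_eq_zero_of_natDegree_lt (p := p) (by omega), zero_mul]
  · simp [add_comm]

end Polynomial

namespace MvPolynomial

variable {R : Type*} [CommSemiring R] {n : ℕ}

theorem card_support_coeff_finSuccEquiv_add {f : MvPolynomial (Fin (n + 1)) R} {a b : ℕ}
    (hab : a ≠ b) :
    ((finSuccEquiv R n f).coeff a).support.card + ((finSuccEquiv R n f).coeff b).support.card =
      {m ∈ f.support | m 0 = a ∨ m 0 = b}.card := by
  rw [Finset.filter_or,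
    Finset.card_union_of_disjoint (Finset.disjoint_filter.2 fun _ _ ↦ by omega),
    ← image_support_finSuccEquiv, ← image_support_finSuccEquiv,
    Finset.card_image_of_injective _ (Finsupp.cons_right_injective a),
    Finset.card_image_of_injective _ (Finsupp.cons_right_injective b)]

theorem card_support_coeff_finSuccEquiv_add_le (f : MvPolynomial (Fin (n + 1)) R) {a b : ℕ}
    (hab : a ≠ b) :
    ((finSuccEquiv R n f).coeff a).support.card + ((finSuccEquiv R n f).coeff b).support.card ≤
      f.support.card :=
  (card_support_coeff_finSuccEquiv_add hab).trans_le (Finset.card_filter_le _ _)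

theorem card_support_eq_of_degreeOf_zero_le_one {f : MvPolynomial (Fin (n + 1)) R}
    (hf : f.degreeOf 0 ≤ 1) :
    f.support.card =
      ((finSuccEquiv R n f).coeff 0).support.card +
        ((finSuccEquiv R n f).coeff 1).support.card := by
  rw [card_support_coeff_finSuccEquiv_add zero_ne_one, Finset.filter_true_of_mem]
  intro m hm
  have : m 0 ≤ f.degreeOf 0 := degreeOf_eq_sup 0 f ▸ Finset.le_sup (f := fun m ↦ m 0) hm
  omega

theorem card_support_le_card_support_mul_of_degreeOf_le_one [NoZeroDivisors R] :
    ∀ {n : ℕ} {g h : MvPolynomial (Fin n) R}, (∀ i, g.degreeOf i ≤ 1) → h ≠ 0 →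
      g.support.card ≤ (g * h).support.card
  | 0, g, h, _, hh => by
    rcases eq_or_ne g 0 with rfl | hg
    · simp
    calc g.support.card ≤ 1 := Finset.card_le_one.2 fun _ _ _ _ ↦ Subsingleton.elim _ _
      _ ≤ (g * h).support.card :=
        Finset.card_pos.2 (support_nonempty.2 (mul_ne_zero hg hh))
  | n + 1, g, h, hg, hh => by
    set G := finSuccEquiv R n g
    set H := finSuccEquiv R n h
    have hG : G.natDegree ≤ 1 := natDegree_finSuccEquiv g ▸ hg 0
    have hH : H ≠ 0 := (EmbeddingLike.map_ne_zero_iff).2 hh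
    have ih : ∀ i j, H.coeff j ≠ 0 →
        (G.coeff i).support.card ≤ (G.coeff i * H.coeff j).support.card := fun i j hj ↦
      card_support_le_card_support_mul_of_degreeOf_le_one
        (fun k ↦ (degreeOf_coeff_finSuccEquiv g k i).trans (hg k.succ)) hj
    have hGH : finSuccEquiv R n (g * h) = G * H := map_mul _ _ _
    calc g.support.card = (G.coeff 0).support.card + (G.coeff 1).support.card :=
          card_support_eq_of_degreeOf_zero_le_one (hg 0)
      _ ≤ (G.coeff 0 * H.coeff H.natTrailingDegree).support.card +
            (G.coeff 1 * H.coeff H.natDegree).support.card :=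
          add_le_add (ih _ _ (trailingCoeff_nonzero_iff_nonzero.2 hH))
            (ih _ _ (leadingCoeff_ne_zero.2 hH))
      _ = ((G * H).coeff H.natTrailingDegree).support.card +
            ((G * H).coeff (H.natDegree + 1)).support.card := by
          rw [coeff_mul_natTrailingDegree_right,
            coeff_mul_natDegree_add_one_of_natDegree_le_one H hG]
      _ ≤ (g * h).support.card := hGH ▸ card_support_coeff_finSuccEquiv_add_le (g * h)
          (Nat.lt_succ_of_le (natTrailingDegree_le_natDegree H)).ne

end MvPolynomial

/-- **Sparsity bound for multilinear factors.** If `g ∈ F[x_1, ..., x_n]` is multilinear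
(every variable has individual degree at most `1` in `g`) and `f = g * h` is nonzero, then
`mon(f) ≥ mon(g)`. -/
theorem stmt7 {F : Type*} [Field F] {n : ℕ} (f g h : MvPolynomial (Fin n) F)
    (hml : ∀ i : Fin n, g.degreeOf i ≤ 1) (hfgh : f = g * h) (hf : f ≠ 0) :
    g.support.card ≤ f.support.card := by
  subst hfgh
  exact MvPolynomial.card_support_le_card_support_mul_of_degreeOf_le_one hml
    (right_ne_zero_of_mul hf)
end
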